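/- arXiv:1112.0955 — 2 statements merged into one kernel-verified Lean document; each statement's English description precedes it below -/
import Mathlib

section
/- Let A, B be k-dimensional linear subspaces of ℝ^d with A ∩ B = {0}, where k ≥ 1. Let a₁ ∈ A and b₁ ∈ B be unit vectors minimizing ‖a−b‖ over all unit vectors a ∈ A, b ∈ B. Then for every a ∈ A with a ⟂ a₁ and every b ∈ B with b ⟂ b₁, one has ⟨a, b₁⟩ = 0 and ⟨b, a₁⟩ = 0. -/
open scoped RealInnerProductSpace

/-!
For unit vectors `‖a - b‖² = 2 - 2⟪a, b⟫`, so the minimizing pair maximizes `⟪a, b₁⟫` over the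
unit sphere of `A` (and symmetrically `⟪a₁, b⟫` over that of `B`). If `a ∈ A` is orthogonal to
`a₁` with `s = ⟪a, b₁⟫ ≠ 0`, then tilting `a₁` towards `a` (the vector `‖a‖²c a₁ + s a`, with
`c = ⟪a₁, b₁⟫`) gives a larger inner product with `b₁` after normalization.
-/

variable {E : Type*} [NormedAddCommGroup E] [InnerProductSpace ℝ E]

theorem real_inner_le_of_norm_sub_le_of_norm_eq_one {a b a₁ b₁ : E}
    (ha : ‖a‖ = 1) (hb : ‖b‖ = 1) (ha₁ : ‖a₁‖ = 1) (hb₁ : ‖b₁‖ = 1)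
    (h : ‖a₁ - b₁‖ ≤ ‖a - b‖) : ⟪a, b⟫ ≤ ⟪a₁, b₁⟫ := by
  have hsq : ‖a₁ - b₁‖ ^ 2 ≤ ‖a - b‖ ^ 2 := pow_le_pow_left₀ (norm_nonneg _) h 2
  rw [norm_sub_sq_real, norm_sub_sq_real, ha, hb, ha₁, hb₁] at hsq
  linarith

namespace Submodule

variable (K : Submodule ℝ E) {a₁ x : E}

theorem real_inner_le_norm_mul_of_maximizer
    (hmax : ∀ a ∈ K, ‖a‖ = 1 → ⟪a, x⟫ ≤ ⟪a₁, x⟫) {a : E} (ha : a ∈ K) :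
    ⟪a, x⟫ ≤ ‖a‖ * ⟪a₁, x⟫ := by
  rcases eq_or_ne a 0 with rfl | ha0
  · simp
  have hpos : 0 < ‖a‖ := norm_pos_iff.mpr ha0
  have hunit := hmax (‖a‖⁻¹ • a) (K.smul_mem _ ha) (norm_smul_inv_norm ha0)
  rw [real_inner_smul_left, inv_mul_le_iff₀ hpos] at hunit
  exact hunit

theorem real_inner_eq_zero_of_maximizer_of_orthogonal (ha₁ : a₁ ∈ K) (ha₁n : ‖a₁‖ = 1)
    (hmax : ∀ a ∈ K, ‖a‖ = 1 → ⟪a, x⟫ ≤ ⟪a₁, x⟫) {a : E} (ha : a ∈ K) (hao : ⟪a, a₁⟫ = 0) :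
    ⟪a, x⟫ = 0 := by
  set c := ⟪a₁, x⟫
  set s := ⟪a, x⟫
  set v := (‖a‖ ^ 2 * c) • a₁ + s • a
  have hv : v ∈ K := K.add_mem (K.smul_mem _ ha₁) (K.smul_mem _ ha)
  have hvx : ⟪v, x⟫ = ‖a‖ ^ 2 * c ^ 2 + s ^ 2 := by
    simp only [v, inner_add_left, real_inner_smul_left]
    ring
  have hvv : ‖v‖ ^ 2 = ‖a‖ ^ 2 * (‖a‖ ^ 2 * c ^ 2 + s ^ 2) := by
    have ha₁a : ⟪a₁, a⟫ = 0 := by rw [real_inner_comm]; exact hao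
    rw [norm_add_sq_real, norm_smul, norm_smul, real_inner_smul_left, real_inner_smul_right,
      ha₁a, ha₁n, Real.norm_eq_abs, Real.norm_eq_abs, mul_pow, mul_pow, sq_abs, sq_abs]
    ring
  have hle := K.real_inner_le_norm_mul_of_maximizer hmax hv
  rw [hvx] at hle
  have hsq : (‖a‖ ^ 2 * c ^ 2 + s ^ 2) ^ 2 ≤ ‖v‖ ^ 2 * c ^ 2 := by
    simpa only [mul_pow] using pow_le_pow_left₀ (by positivity) hle 2
  rw [hvv] at hsq
  have hs4 : s ^ 4 ≤ 0 := by
    nlinarith [mul_nonneg (mul_nonneg (sq_nonneg ‖a‖) (sq_nonneg c)) (sq_nonneg s)]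
  exact pow_eq_zero_iff (n := 4) (by norm_num) |>.mp (le_antisymm hs4 (by positivity))

end Submodule

theorem minimizing_pair_orthogonality_general (d : ℕ)
    (A B : Submodule ℝ (EuclideanSpace ℝ (Fin d)))
    (a₁ b₁ : EuclideanSpace ℝ (Fin d)) (ha₁ : a₁ ∈ A) (hb₁ : b₁ ∈ B)
    (ha₁n : ‖a₁‖ = 1) (hb₁n : ‖b₁‖ = 1)
    (hmin : ∀ a ∈ A, ∀ b ∈ B, ‖a‖ = 1 → ‖b‖ = 1 → ‖a₁ - b₁‖ ≤ ‖a - b‖) :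
    (∀ a ∈ A, ⟪a, a₁⟫ = 0 → ⟪a, b₁⟫ = 0) ∧
    (∀ b ∈ B, ⟪b, b₁⟫ = 0 → ⟪b, a₁⟫ = 0) := by
  have hmax : ∀ a ∈ A, ∀ b ∈ B, ‖a‖ = 1 → ‖b‖ = 1 → ⟪a, b⟫ ≤ ⟪a₁, b₁⟫ :=
    fun a ha b hb han hbn =>
      real_inner_le_of_norm_sub_le_of_norm_eq_one han hbn ha₁n hb₁n (hmin a ha b hb han hbn)
  refine ⟨fun a ha => A.real_inner_eq_zero_of_maximizer_of_orthogonal ha₁ ha₁n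
      (fun a ha han => hmax a ha b₁ hb₁ han hb₁n) ha,
    fun b hb => B.real_inner_eq_zero_of_maximizer_of_orthogonal hb₁ hb₁n
      (fun b hb hbn => ?_) hb⟩
  rw [real_inner_comm a₁ b, real_inner_comm a₁ b₁]
  exact hmax a₁ ha₁ b hb ha₁n hbn

/-- Let `A, B` be `k`-dimensional subspaces of `ℝ^d` with `A ∩ B = {0}`, `k ≥ 1`.
If `a₁ ∈ A`, `b₁ ∈ B` are unit vectors minimizing `‖a − b‖` over all unit vectors
`a ∈ A`, `b ∈ B`, then every `a ∈ A` orthogonal to `a₁` satisfies `⟨a, b₁⟩ = 0` and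
every `b ∈ B` orthogonal to `b₁` satisfies `⟨b, a₁⟩ = 0`. -/
theorem minimizing_pair_orthogonality (d k : ℕ) (hk : 1 ≤ k)
    (A B : Submodule ℝ (EuclideanSpace ℝ (Fin d))) (hAB : A ⊓ B = ⊥)
    (hA : Module.finrank ℝ A = k) (hB : Module.finrank ℝ B = k)
    (a₁ b₁ : EuclideanSpace ℝ (Fin d)) (ha₁ : a₁ ∈ A) (hb₁ : b₁ ∈ B)
    (ha₁n : ‖a₁‖ = 1) (hb₁n : ‖b₁‖ = 1)
    (hmin : ∀ a ∈ A, ∀ b ∈ B, ‖a‖ = 1 → ‖b‖ = 1 → ‖a₁ - b₁‖ ≤ ‖a - b‖) :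
    (∀ a ∈ A, ⟪a, a₁⟫ = 0 → ⟪a, b₁⟫ = 0) ∧
    (∀ b ∈ B, ⟪b, b₁⟫ = 0 → ⟪b, a₁⟫ = 0) :=
  minimizing_pair_orthogonality_general d A B a₁ b₁ ha₁ hb₁ ha₁n hb₁n hmin
end

section
/- Let a₁, …, a_d be an orthonormal basis of ℝ^d and b₁, …, b_s an orthonormal system in ℝ^d, with r + s = d and r, s ≥ 0. Then ‖a₁ ∧ … ∧ a_r ∧ b₁ ∧ … ∧ b_s‖² = ⟨a_{r+1} ∧ … ∧ a_d, b₁ ∧ … ∧ b_s⟩². -/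
/-!
With `B = (⟪a_i, b_j⟫)_{i ≤ r}` and `D = (⟪a_{r+i}, b_j⟫)`, the Gram matrix of
`a₁, …, a_r, b₁, …, b_s` is the block matrix `[[1, B], [Bᵀ, 1]]`, whose determinant is the Schur
complement `det (1 - Bᵀ B)`. Parseval's identity in the basis `a` splits `⟪b_j, b_k⟫ = δ_jk` as
`Bᵀ B + Dᵀ D = 1`, so this determinant is `det (Dᵀ D) = (det D)²`.
-/

open scoped RealInnerProductSpace

/-- The Gram-determinant inner product of two families of vectors:
`⟨u₁∧…∧u_k, v₁∧…∧v_k⟩ = det((⟨u_i, v_j⟩))`.  For `u = v` this is the squared norm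
`‖u₁∧…∧u_k‖²` of the corresponding simple multivector. -/
noncomputable def gramInner {d : ℕ} {ι : Type*} [Fintype ι] [DecidableEq ι]
    (u v : ι → EuclideanSpace ℝ (Fin d)) : ℝ :=
  Matrix.det (Matrix.of fun i j => ⟪u i, v j⟫)

open Matrix

section InnerMatrix

variable {E : Type*} [NormedAddCommGroup E] [InnerProductSpace ℝ E] {ι κ μ ν : Type*}

def innerMatrix (u : ι → E) (v : κ → E) : Matrix ι κ ℝ :=
  of fun i j => ⟪u i, v j⟫

theorem innerMatrix_self_eq_gram (u : ι → E) : innerMatrix u u = gram ℝ u := rfl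

theorem transpose_innerMatrix (u : ι → E) (v : κ → E) :
    (innerMatrix u v)ᵀ = innerMatrix v u := by
  ext i j
  exact real_inner_comm _ _

theorem innerMatrix_sum_elim (u : ι → E) (u' : κ → E) (v : μ → E) (v' : ν → E) :
    innerMatrix (Sum.elim u u') (Sum.elim v v') =
      fromBlocks (innerMatrix u v) (innerMatrix u v') (innerMatrix u' v) (innerMatrix u' v') := by
  ext (i | i) (j | j) <;> rfl

theorem det_innerMatrix_sum_elim_of_orthonormal [Fintype ι] [DecidableEq ι] [Fintype κ]
    [DecidableEq κ] {u : ι → E} {v : κ → E} (hu : Orthonormal ℝ u) (hv : Orthonormal ℝ v) :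
    (innerMatrix (Sum.elim u v) (Sum.elim u v)).det
      = (1 - innerMatrix v u * innerMatrix u v).det := by
  rw [innerMatrix_sum_elim, innerMatrix_self_eq_gram u, innerMatrix_self_eq_gram v,
    gram_eq_one_iff_orthonormal.2 hu, gram_eq_one_iff_orthonormal.2 hv, det_fromBlocks_one₁₁]

namespace OrthonormalBasis

variable [Fintype ι] [Fintype κ]

theorem innerMatrix_mul_add_innerMatrix_mul (e : OrthonormalBasis (ι ⊕ κ) ℝ E) (v : μ → E)
    (w : ν → E) :
    innerMatrix v (e ∘ Sum.inl) * innerMatrix (e ∘ Sum.inl) w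
      + innerMatrix v (e ∘ Sum.inr) * innerMatrix (e ∘ Sum.inr) w = innerMatrix v w := by
  ext j k
  simp [innerMatrix, mul_apply, ← e.sum_inner_mul_inner (v j) (w k), Fintype.sum_sum_type]

theorem det_innerMatrix_sum_elim_eq_sq [DecidableEq ι] [DecidableEq κ]
    (e : OrthonormalBasis (ι ⊕ κ) ℝ E) {b : κ → E} (hb : Orthonormal ℝ b) :
    (innerMatrix (Sum.elim (e ∘ Sum.inl) b) (Sum.elim (e ∘ Sum.inl) b)).det
      = (innerMatrix (e ∘ Sum.inr) b).det ^ 2 := by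
  have hparseval := e.innerMatrix_mul_add_innerMatrix_mul b b
  rw [innerMatrix_self_eq_gram b, gram_eq_one_iff_orthonormal.2 hb] at hparseval
  rw [det_innerMatrix_sum_elim_of_orthonormal (e.orthonormal.comp _ Sum.inl_injective) hb,
    ← hparseval, add_sub_cancel_left, det_mul, ← transpose_innerMatrix, det_transpose, sq]

end OrthonormalBasis

end InnerMatrix

/-- Let `a₁,…,a_d` be an orthonormal basis of `ℝ^d` and `b₁,…,b_s` an orthonormal system,
`r + s = d`.  Then `‖a₁∧…∧a_r∧b₁∧…∧b_s‖² = ⟨a_{r+1}∧…∧a_d, b₁∧…∧b_s⟩²`. -/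
theorem wedge_normSq_eq_inner_sq (d r s : ℕ) (hrs : r + s = d)
    (a : Fin d → EuclideanSpace ℝ (Fin d)) (ha : Orthonormal ℝ a)
    (haspan : Submodule.span ℝ (Set.range a) = ⊤)
    (b : Fin s → EuclideanSpace ℝ (Fin d)) (hb : Orthonormal ℝ b) :
    gramInner (Sum.elim (fun i : Fin r => a (Fin.castLE (by omega) i)) b)
        (Sum.elim (fun i : Fin r => a (Fin.castLE (by omega) i)) b)
      = (gramInner (fun j : Fin s => a ⟨r + (j : ℕ), by omega⟩) b) ^ 2 := by
  let e := (OrthonormalBasis.mk ha haspan.ge).reindex (finSumFinEquiv.trans (finCongr hrs)).symm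
  have he_inl : e ∘ Sum.inl = fun i : Fin r => a (Fin.castLE (by omega) i) := by
    funext i
    simp only [e, Function.comp_apply, OrthonormalBasis.reindex_apply, OrthonormalBasis.coe_mk]
    rfl
  have he_inr : e ∘ Sum.inr = fun j : Fin s => a ⟨r + (j : ℕ), by omega⟩ := by
    funext j
    simp only [e, Function.comp_apply, OrthonormalBasis.reindex_apply, OrthonormalBasis.coe_mk]
    rfl
  have h := e.det_innerMatrix_sum_elim_eq_sq hb
  rwa [he_inl, he_inr] at h
end
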